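/- arXiv:1801.02088 — 12 statements merged into one kernel-verified Lean document; each statement's English description precedes it below -/
import Mathlib

section
/- Let (A, p, 0, ½, 1) be a mobi algebra. Then for all a, b, c, d ∈ A: (1) p(a, p(0,c,d), b) = p(a, c, p(a,d,b)); (2) p(a, p(1,c,d), b) = p(b, c, p(a,d,b)); (3) p(a, p(c,d,0), b) = p(p(a,c,b), d, a); (4) p(a, p(c,d,1), b) = p(p(a,c,b), d, b). -/
/-- A mobi algebra: a set with a ternary operation `p` and constants `e0`, `half`, `e1`. -/
structure MobiAlgebra (A : Type*) where
  p : A → A → A → A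
  e0 : A
  half : A
  e1 : A
  A1 : p e1 half e0 = half
  A2 : ∀ a, p e0 a e1 = a
  A3 : ∀ a b, p a b a = a
  A4 : ∀ a b, p a e0 b = a
  A5 : ∀ a b, p a e1 b = b
  A6 : ∀ a a' b, p a half b = p a' half b → a = a'
  A7 : ∀ a b c1 c2 c3, p a (p c1 c2 c3) b = p (p a c1 b) c2 (p a c3 b)
  A8 : ∀ a1 a2 b1 b2 c,
    p (p a1 c b1) half (p a2 c b2) = p (p a1 half a2) c (p b1 half b2)

/-- Proposition 2.2: basic properties (P11)-(P14) of a mobi algebra. -/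
theorem mobi_prop_p1 {A : Type*} (M : MobiAlgebra A) (a b c d : A) :
    M.p a (M.p M.e0 c d) b = M.p a c (M.p a d b) ∧
    M.p a (M.p M.e1 c d) b = M.p b c (M.p a d b) ∧
    M.p a (M.p c d M.e0) b = M.p (M.p a c b) d a ∧
    M.p a (M.p c d M.e1) b = M.p (M.p a c b) d b :=
  ⟨by rw [M.A7, M.A4], by rw [M.A7, M.A5], by rw [M.A7, M.A4], by rw [M.A7, M.A5]⟩
end

section
/- Let (A, p, 0, ½, 1) be a mobi algebra. Then for all a, b, c ∈ A: (1) p(a, p(1,c,0), b) = p(b, c, a); (2) p(a, ½, b) = p(b, ½, a); (3) p(1, p(1,c,0), 0) = c. -/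
namespace MobiAlgebra

variable {A : Type*} (M : MobiAlgebra A)

theorem p_p_one_zero (a b c : A) : M.p a (M.p M.e1 c M.e0) b = M.p b c a := by
  rw [M.A7, M.A5, M.A4]

theorem p_half_comm (a b : A) : M.p a M.half b = M.p b M.half a := by
  simpa only [M.A1] using M.p_p_one_zero a b M.half

theorem p_one_p_one_zero (c : A) : M.p M.e1 (M.p M.e1 c M.e0) M.e0 = c := by
  rw [p_p_one_zero, M.A2]

end MobiAlgebra

/-- Corollary 2.3: properties (P21)-(P23) of a mobi algebra. -/
theorem mobi_cor_p2 {A : Type*} (M : MobiAlgebra A) (a b c : A) :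
    M.p a (M.p M.e1 c M.e0) b = M.p b c a ∧
    M.p a M.half b = M.p b M.half a ∧
    M.p M.e1 (M.p M.e1 c M.e0) M.e0 = c :=
  ⟨M.p_p_one_zero a b c, M.p_half_comm a b, M.p_one_p_one_zero c⟩
end

section
/- Let (A, p, 0, ½, 1) be a mobi algebra and define the unary operation ā = p(1,a,0). Then for all a, b, c ∈ A: (1) the double complement satisfies a̿ = a; (2) 1̄ = 0; (3) p(b,c,a) = p(a, c̄, b); (4) the complement of p(a,c,b) equals p(ā, c, b̄). -/
namespace MobiAlgebra

variable {A : Type*} (M : MobiAlgebra A)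

def compl (a : A) : A := M.p M.e1 a M.e0

theorem p_compl (a b c : A) : M.p a (M.compl c) b = M.p b c a := by
  rw [compl, M.A7, M.A5, M.A4]

theorem compl_compl (a : A) : M.compl (M.compl a) = a :=
  (M.p_compl M.e1 M.e0 a).trans (M.A2 a)

theorem compl_one : M.compl M.e1 = M.e0 :=
  M.A5 M.e1 M.e0

theorem compl_p (a b c : A) : M.compl (M.p a c b) = M.p (M.compl a) c (M.compl b) :=
  M.A7 M.e1 M.e0 a c b

end MobiAlgebra

/-- Properties (PC0)-(PC3),(PC5) of the derived complement ā = p(1,a,0)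
in a mobi algebra. -/
theorem mobi_complement_props {A : Type*} (M : MobiAlgebra A) (a b c : A) :
    M.p M.e1 (M.p M.e1 a M.e0) M.e0 = a ∧
    M.p M.e1 M.e1 M.e0 = M.e0 ∧
    M.p b c a = M.p a (M.p M.e1 c M.e0) b ∧
    M.p M.e1 (M.p a c b) M.e0 =
      M.p (M.p M.e1 a M.e0) c (M.p M.e1 b M.e0) := by
  exact ⟨M.compl_compl a, M.compl_one, (M.p_compl a b c).symm, M.compl_p a b c⟩
end

section
/- Let (A, p, 0, ½, 1) be a mobi algebra and define ā = p(1,a,0), a·b = p(0,a,b), a⊕b = p(a,½,b). Then (A, ¯(), ⊕, ·, 1) is an IMM algebra in which 1̄ = 0 and 1̄ ⊕ 1 = ½. -/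
/-- An involutive medial monoid (IMM) algebra. -/
structure IMM (B : Type*) where
  inv : B → B
  oplus : B → B → B
  mul : B → B → B
  one : B
  B1 : ∀ a, oplus a a = a
  B2 : ∀ a b, oplus a b = oplus b a
  B3 : ∀ a b c d, oplus (oplus a b) (oplus c d) = oplus (oplus a c) (oplus b d)
  B4 : ∀ a b c, mul a (mul b c) = mul (mul a b) c
  B5 : ∀ a, mul a one = a
  B5' : ∀ a, mul one a = a
  B6 : ∀ a b c, mul a (oplus b c) = oplus (mul a b) (mul a c)
  B6' : ∀ a b c, mul (oplus a b) c = oplus (mul a c) (mul b c)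
  B7 : ∀ a, inv (inv a) = a
  B8 : ∀ a b, inv (oplus a b) = oplus (inv a) (inv b)
  B9 : ∀ a, mul a (inv one) = inv one
  B9' : ∀ a, mul (inv one) a = inv one
  B10 : ∀ a, oplus (inv a) a = oplus (inv one) one

/-!
Each IMM law is a single instance of a mobi axiom, mostly of the self-distributivity (A7) or the
mediality (A8) of `p`, specialised at the constants `0, ½, 1` and simplified with (A1)–(A5).
-/

namespace MobiAlgebra

variable {A : Type*} (M : MobiAlgebra A)

def inv (a : A) : A := M.p M.e1 a M.e0

def oplus (a b : A) : A := M.p a M.half b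

def mul (a b : A) : A := M.p M.e0 a b

theorem oplus_self (a : A) : M.oplus a a = a := M.A3 a M.half

theorem oplus_comm (a b : A) : M.oplus a b = M.oplus b a := by
  have h := M.A7 a b M.e1 M.half M.e0
  rwa [M.A1, M.A5, M.A4] at h

theorem oplus_oplus_oplus_comm (a b c d : A) :
    M.oplus (M.oplus a b) (M.oplus c d) = M.oplus (M.oplus a c) (M.oplus b d) :=
  M.A8 a c b d M.half

theorem mul_assoc (a b c : A) : M.mul a (M.mul b c) = M.mul (M.mul a b) c := by
  have h := M.A7 M.e0 c M.e0 a b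
  rw [M.A4] at h
  exact h.symm

theorem mul_e1 (a : A) : M.mul a M.e1 = a := M.A2 a

theorem e1_mul (a : A) : M.mul M.e1 a = a := M.A5 M.e0 a

theorem mul_oplus (a b c : A) : M.mul a (M.oplus b c) = M.oplus (M.mul a b) (M.mul a c) := by
  have h := M.A8 M.e0 M.e0 b c a
  rw [M.A3] at h
  exact h.symm

theorem oplus_mul (a b c : A) : M.mul (M.oplus a b) c = M.oplus (M.mul a c) (M.mul b c) :=
  M.A7 M.e0 c a M.half b

theorem inv_inv (a : A) : M.inv (M.inv a) = a := by
  have h := M.A7 M.e1 M.e0 M.e1 a M.e0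
  rwa [M.A5, M.A4, M.A2] at h

theorem inv_oplus (a b : A) : M.inv (M.oplus a b) = M.oplus (M.inv a) (M.inv b) :=
  M.A7 M.e1 M.e0 a M.half b

theorem inv_e1 : M.inv M.e1 = M.e0 := M.A5 M.e1 M.e0

theorem mul_e0 (a : A) : M.mul a M.e0 = M.e0 := M.A3 M.e0 a

theorem e0_mul (a : A) : M.mul M.e0 a = M.e0 := M.A4 M.e0 a

theorem oplus_e0_e1 : M.oplus M.e0 M.e1 = M.half := M.A2 M.half

theorem inv_oplus_self (a : A) : M.oplus (M.inv a) a = M.half := by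
  have h := M.A8 M.e1 M.e0 M.e0 M.e1 a
  rwa [M.A1, M.A2, M.A2, M.A3] at h

def toIMM : IMM A where
  inv := M.inv
  oplus := M.oplus
  mul := M.mul
  one := M.e1
  B1 := M.oplus_self
  B2 := M.oplus_comm
  B3 := M.oplus_oplus_oplus_comm
  B4 := M.mul_assoc
  B5 := M.mul_e1
  B5' := M.e1_mul
  B6 := M.mul_oplus
  B6' := M.oplus_mul
  B7 := M.inv_inv
  B8 := M.inv_oplus
  B9 a := by rw [inv_e1, mul_e0]
  B9' a := by rw [inv_e1, e0_mul]
  B10 a := by rw [inv_oplus_self, inv_e1, oplus_e0_e1]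

end MobiAlgebra

/-- Proposition 4.3: every mobi algebra gives rise to an IMM algebra via
ā = p(1,a,0), a·b = p(0,a,b), a⊕b = p(a,½,b), in which 1̄ = 0 and 1̄⊕1 = ½. -/
theorem mobi_to_IMM {A : Type*} (M : MobiAlgebra A) :
    ∃ I : IMM A,
      I.inv = (fun a => M.p M.e1 a M.e0) ∧
      I.oplus = (fun a b => M.p a M.half b) ∧
      I.mul = (fun a b => M.p M.e0 a b) ∧
      I.one = M.e1 ∧
      I.inv I.one = M.e0 ∧
      I.oplus (I.inv I.one) I.one = M.half :=
  ⟨M.toIMM, rfl, rfl, rfl, rfl, M.inv_e1, M.inv_oplus_self M.e1⟩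
end

section
/- Let (B, ¯(), ⊕, ·, 1) be an IMM algebra. Then for all a, b, c ∈ B: (1) a⊕(b⊕c) = (a⊕b)⊕(a⊕c); (2) ¯(1̄⊕1) = 1̄⊕1; (3) if ā = a then a = 1̄⊕1; (4) (1̄⊕1)·a = 1̄⊕a; (5) (1̄⊕1)·a = a·(1̄⊕1). -/
namespace IMM

variable {B : Type*} (I : IMM B)

theorem oplus_left_distrib (a b c : B) :
    I.oplus a (I.oplus b c) = I.oplus (I.oplus a b) (I.oplus a c) := by
  rw [I.B3, I.B1]

theorem inv_oplus_inv_one_one :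
    I.inv (I.oplus (I.inv I.one) I.one) = I.oplus (I.inv I.one) I.one := by
  rw [I.B8, I.B7, I.B2]

theorem eq_oplus_inv_one_one_of_inv_eq {a : B} (h : I.inv a = a) :
    a = I.oplus (I.inv I.one) I.one := by
  rw [← I.B10 a, h, I.B1]

theorem oplus_inv_one_one_mul (a : B) :
    I.mul (I.oplus (I.inv I.one) I.one) a = I.oplus (I.inv I.one) a := by
  rw [I.B6', I.B9', I.B5']

theorem mul_oplus_inv_one_one (a : B) :
    I.mul a (I.oplus (I.inv I.one) I.one) = I.oplus (I.inv I.one) a := by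
  rw [I.B6, I.B9, I.B5]

end IMM

/-- Proposition 4.5: properties (IMMP1)-(IMMP5) of an IMM algebra. -/
theorem IMM_props {B : Type*} (I : IMM B) (a b c : B) :
    I.oplus a (I.oplus b c) = I.oplus (I.oplus a b) (I.oplus a c) ∧
    I.inv (I.oplus (I.inv I.one) I.one) = I.oplus (I.inv I.one) I.one ∧
    (I.inv a = a → a = I.oplus (I.inv I.one) I.one) ∧
    I.mul (I.oplus (I.inv I.one) I.one) a = I.oplus (I.inv I.one) a ∧
    I.mul (I.oplus (I.inv I.one) I.one) a =
      I.mul a (I.oplus (I.inv I.one) I.one) :=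
  ⟨I.oplus_left_distrib a b c, I.inv_oplus_inv_one_one, I.eq_oplus_inv_one_one_of_inv_eq,
    I.oplus_inv_one_one_mul a,
    (I.oplus_inv_one_one_mul a).trans (I.mul_oplus_inv_one_one a).symm⟩
end

section
/- Let (R, +, ·, 0, 1) be a unitary ring. The following are equivalent: (i) the element 1+1 admits a (two-sided) multiplicative inverse in R; (ii) there is a unique IMM algebra structure (R, ¯(), ⊕, ·, 1) on R (with the same multiplication · and unit 1) such that ā = 1−a and a⊕b = (1̄⊕1)·(a+b) for all a, b ∈ R; (iii) there is a unique IMM algebra structure (R, ¯(), ⊕, ·, 1) on R (with the same multiplication · and unit 1) such that ā = 1−a and a+b = (1+1)·(a⊕b) for all a, b ∈ R. -/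
section

variable {R : Type*} [Ring R]

theorem commute_of_two_mul_eq_one {h : R} (h1 : (1 + 1) * h = 1) (h2 : h * (1 + 1) = 1)
    (a : R) : Commute h a :=
  Commute.units_inv_left (u := ⟨1 + 1, h, h1, h2⟩) ((Commute.one_left a).add_left (.one_left a))

namespace IMM

theorem ext {B : Type*} {I J : IMM B} (hinv : I.inv = J.inv) (hoplus : I.oplus = J.oplus)
    (hmul : I.mul = J.mul) (hone : I.one = J.one) : I = J := by
  cases I; cases J; simp_all

def ofHalf (h : R) (h1 : (1 + 1) * h = 1) (h2 : h * (1 + 1) = 1) : IMM R where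
  inv a := 1 - a
  oplus a b := h * (a + b)
  mul a b := a * b
  one := 1
  B1 a := by
    show h * (a + a) = a
    rw [← two_mul, ← one_add_one_eq_two, ← mul_assoc, h2, one_mul]
  B2 a b := by rw [add_comm]
  B3 a b c d := by
    show h * (h * (a + b) + h * (c + d)) = h * (h * (a + c) + h * (b + d))
    rw [← mul_add, ← mul_add, add_add_add_comm]
  B4 a b c := (mul_assoc a b c).symm
  B5 := mul_one
  B5' := one_mul
  B6 a b c := by
    show a * (h * (b + c)) = h * (a * b + a * c)
    rw [← mul_assoc, ← (commute_of_two_mul_eq_one h1 h2 a).eq, mul_assoc, mul_add]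
  B6' a b c := by
    show h * (a + b) * c = h * (a * c + b * c)
    rw [mul_assoc, add_mul]
  B7 a := sub_sub_cancel 1 a
  B8 a b := by
    show 1 - h * (a + b) = h * ((1 - a) + (1 - b))
    rw [sub_add_sub_comm, mul_sub, h2]
  B9 a := by simp
  B9' a := by simp
  B10 a := by simp

theorem ofHalf_oplus_inv_one_one (h : R) (h1 : (1 + 1) * h = 1) (h2 : h * (1 + 1) = 1) :
    (ofHalf h h1 h2).oplus ((ofHalf h h1 h2).inv (ofHalf h h1 h2).one) (ofHalf h h1 h2).one = h := by
  simp [ofHalf]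

variable (I : IMM R) {c : R}

theorem mul_two_eq_one_of_oplus_eq (hop : ∀ a b, I.oplus a b = c * (a + b)) :
    c * (1 + 1) = 1 := by
  rw [← hop, I.B1]

theorem commute_of_oplus_eq (hmul : I.mul = (fun a b => a * b))
    (hop : ∀ a b, I.oplus a b = c * (a + b)) (a : R) : Commute a c := by
  show a * c = c * a
  simpa only [hmul, hop, mul_one, mul_zero, add_zero] using I.B6 a 1 0

theorem two_mul_eq_one_of_oplus_eq (hmul : I.mul = (fun a b => a * b))
    (hop : ∀ a b, I.oplus a b = c * (a + b)) : (1 + 1) * c = 1 := by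
  rw [(I.commute_of_oplus_eq hmul hop _).eq, I.mul_two_eq_one_of_oplus_eq hop]

theorem oplus_eq_of_add_eq_two_mul (hmul : I.mul = (fun a b => a * b)) (hone : I.one = 1)
    (hinv : ∀ a, I.inv a = 1 - a) (hadd : ∀ a b : R, a + b = (1 + 1) * I.oplus a b) (a b : R) :
    I.oplus a b = I.oplus (I.inv I.one) I.one * (a + b) := by
  set c := I.oplus (I.inv I.one) I.one
  have hc : (1 + 1) * c = 1 := by
    rw [← hadd, hinv, hone, sub_self, zero_add]
  have hB6 := I.B6 c a b
  simp only [hmul] at hB6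
  calc I.oplus a b = (1 + 1) * (c * I.oplus a b) := by rw [← mul_assoc, hc, one_mul]
    _ = c * (a + b) := by rw [hB6, ← hadd, mul_add]

theorem eq_ofHalf (hmul : I.mul = (fun a b => a * b)) (hone : I.one = 1)
    (hinv : ∀ a, I.inv a = 1 - a) (hop : ∀ a b, I.oplus a b = c * (a + b))
    {h : R} (h1 : (1 + 1) * h = 1) (h2 : h * (1 + 1) = 1) : I = ofHalf h h1 h2 := by
  have hch : c = h := left_inv_eq_right_inv (I.mul_two_eq_one_of_oplus_eq hop) h1
  refine ext (funext hinv) ?_ hmul hone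
  funext a b
  rw [hop, hch]
  rfl

end IMM

end

/-- Theorem 5.4: for a unitary ring R, the following are equivalent:
(i) 1+1 has a two-sided multiplicative inverse;
(ii) there is a unique IMM algebra structure (R,¯(),⊕,·,1) with
     ā = 1 - a and a⊕b = (1̄⊕1)·(a+b);
(iii) there is a unique IMM algebra structure (R,¯(),⊕,·,1) with
     ā = 1 - a and a+b = (1+1)·(a⊕b). -/
theorem ring_IMM_equiv {R : Type*} [Ring R] :
    ((∃ h : R, (1 + 1) * h = 1 ∧ h * (1 + 1) = 1) ↔
      (∃! I : IMM R,
        I.mul = (fun a b => a * b) ∧ I.one = 1 ∧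
        (∀ a, I.inv a = 1 - a) ∧
        ∀ a b : R, I.oplus a b =
          I.oplus (I.inv I.one) I.one * (a + b))) ∧
    ((∃ h : R, (1 + 1) * h = 1 ∧ h * (1 + 1) = 1) ↔
      (∃! I : IMM R,
        I.mul = (fun a b => a * b) ∧ I.one = 1 ∧
        (∀ a, I.inv a = 1 - a) ∧
        ∀ a b : R, a + b = (1 + 1) * I.oplus a b)) := by
  have inv_two_of (I : IMM R) (hmul : I.mul = (fun a b => a * b)) {c : R}
      (hop : ∀ a b, I.oplus a b = c * (a + b)) : ∃ h : R, (1 + 1) * h = 1 ∧ h * (1 + 1) = 1 :=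
    ⟨c, I.two_mul_eq_one_of_oplus_eq hmul hop, I.mul_two_eq_one_of_oplus_eq hop⟩
  refine ⟨⟨?_, ?_⟩, ⟨?_, ?_⟩⟩
  · rintro ⟨h, h1, h2⟩
    refine ⟨IMM.ofHalf h h1 h2, ⟨rfl, rfl, fun _ => rfl, ?_⟩, ?_⟩
    · intro a b
      rw [IMM.ofHalf_oplus_inv_one_one]
      rfl
    · rintro I ⟨hmul, hone, hinv, hop⟩
      exact I.eq_ofHalf hmul hone hinv hop h1 h2
  · rintro ⟨I, ⟨hmul, -, -, hop⟩, -⟩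
    exact inv_two_of I hmul hop
  · rintro ⟨h, h1, h2⟩
    refine ⟨IMM.ofHalf h h1 h2, ⟨rfl, rfl, fun _ => rfl, fun a b => ?_⟩, ?_⟩
    · show a + b = (1 + 1) * (h * (a + b))
      rw [← mul_assoc, h1, one_mul]
    · rintro I ⟨hmul, hone, hinv, hadd⟩
      exact I.eq_ofHalf hmul hone hinv (I.oplus_eq_of_add_eq_two_mul hmul hone hinv hadd) h1 h2
  · rintro ⟨I, ⟨hmul, hone, hinv, hadd⟩, -⟩
    exact inv_two_of I hmul (I.oplus_eq_of_add_eq_two_mul hmul hone hinv hadd)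
end

section
/- Every IMM* algebra is an IMM algebra: if (C, ¯(), ⊕, ·, 1) is an IMM* algebra, then it satisfies all the axioms of an IMM algebra; in particular a̿ = a and ¯(a⊕b) = ā⊕b̄ hold for all a, b ∈ C. -/
/-- An IMM* algebra: like an IMM algebra but with cancellative `⊕`
(axioms (C1)-(C9)). -/
structure IMMStar (C : Type*) where
  inv : C → C
  oplus : C → C → C
  mul : C → C → C
  one : C
  C1 : ∀ a, oplus a a = a
  C2 : ∀ a b, oplus a b = oplus b a
  C3 : ∀ a a' b, oplus a b = oplus a' b → a = a'
  C4 : ∀ a b c d, oplus (oplus a b) (oplus c d) = oplus (oplus a c) (oplus b d)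
  C5 : ∀ a b c, mul a (mul b c) = mul (mul a b) c
  C6 : ∀ a, mul a one = a
  C6' : ∀ a, mul one a = a
  C7 : ∀ a b c, mul a (oplus b c) = oplus (mul a b) (mul a c)
  C7' : ∀ a b c, mul (oplus a b) c = oplus (mul a c) (mul b c)
  C8 : ∀ a, mul a (inv one) = inv one
  C8' : ∀ a, mul (inv one) a = inv one
  C9 : ∀ a, oplus (inv a) a = oplus (inv one) one

/-!
Cancellativity of `⊕` makes the complement unique: `x ⊕ a = 1̄ ⊕ 1` forces `x = ā`. Both
`a ⊕ ā = 1̄ ⊕ 1` and, by mediality and idempotence, `(ā ⊕ b̄) ⊕ (a ⊕ b) = 1̄ ⊕ 1` hold, which gives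
`a̿ = a` and `¯(a ⊕ b) = ā ⊕ b̄`.
-/

namespace IMMStar

variable {C : Type*} (S : IMMStar C)

theorem eq_inv_of_oplus_eq {x a : C} (h : S.oplus x a = S.oplus (S.inv S.one) S.one) :
    x = S.inv a :=
  S.C3 x (S.inv a) a (h.trans (S.C9 a).symm)

theorem inv_inv (a : C) : S.inv (S.inv a) = a :=
  (S.eq_inv_of_oplus_eq ((S.C2 a (S.inv a)).trans (S.C9 a))).symm

theorem inv_oplus (a b : C) : S.inv (S.oplus a b) = S.oplus (S.inv a) (S.inv b) := by
  refine (S.eq_inv_of_oplus_eq ?_).symm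
  calc S.oplus (S.oplus (S.inv a) (S.inv b)) (S.oplus a b)
      = S.oplus (S.oplus (S.inv a) a) (S.oplus (S.inv b) b) := S.C4 _ _ _ _
    _ = S.oplus (S.inv S.one) S.one := by rw [S.C9 a, S.C9 b, S.C1]

def toIMM : IMM C where
  inv := S.inv
  oplus := S.oplus
  mul := S.mul
  one := S.one
  B1 := S.C1
  B2 := S.C2
  B3 := S.C4
  B4 := S.C5
  B5 := S.C6
  B5' := S.C6'
  B6 := S.C7
  B6' := S.C7'
  B7 := S.inv_inv
  B8 := S.inv_oplus
  B9 := S.C8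
  B9' := S.C8'
  B10 := S.C9

end IMMStar

/-- Every IMM* algebra is an IMM algebra; in particular the involution
and complement-of-midpoints laws hold. -/
theorem IMMStar_to_IMM {C : Type*} (S : IMMStar C) :
    (∃ I : IMM C,
      I.inv = S.inv ∧ I.oplus = S.oplus ∧ I.mul = S.mul ∧ I.one = S.one) ∧
    (∀ a, S.inv (S.inv a) = a) ∧
    (∀ a b, S.inv (S.oplus a b) = S.oplus (S.inv a) (S.inv b)) :=
  ⟨⟨S.toIMM, rfl, rfl, rfl, rfl⟩, S.inv_inv, S.inv_oplus⟩
end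

section
/- Let (A, ¯(), ⊕, ·, 1) be an IMM* algebra. The following are equivalent: (i) for each a, b, c ∈ A the equation 1̄⊕x = (b̄·a)⊕(b·c) has a solution x in A; (ii) there is a unique ternary operation p on A such that (A, p, 1̄, 1̄⊕1, 1) is a mobi algebra and 1̄ ⊕ p(a,b,c) = (b̄·a)⊕(b·c) for all a, b, c ∈ A. -/
/-!
The defining equation `1̄ ⊕ p(a,b,c) = b̄·a ⊕ b·c` is equivalent to `p(a,b,c) ⊕ b·a = a ⊕ b·c`:
`1̄ ⊕ x` distributes over `⊕` because `⊕` is idempotent and medial, and `1̄ ⊕ a = b̄·a ⊕ b·a`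
by (C9). Since `⊕` is cancellative, the second form determines `p(a,b,c)`, so `p` is unique,
and each mobi axiom reduces to an identity of that shape, which follows from distributivity,
the medial law and cancellation.
-/

theorem MobiAlgebra.ext {A : Type*} {M N : MobiAlgebra A} (hp : M.p = N.p) (h0 : M.e0 = N.e0)
    (hh : M.half = N.half) (h1 : M.e1 = N.e1) : M = N := by
  cases M; cases N
  cases hp; cases h0; cases hh; cases h1
  rfl

namespace IMMStar

variable {A : Type*} (S : IMMStar A)

def IsMobiOp (p : A → A → A → A) : Prop :=
  ∀ a b c, S.oplus (S.inv S.one) (p a b c) = S.oplus (S.mul (S.inv b) a) (S.mul b c)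

theorem oplus_left_cancel {x y z : A} (h : S.oplus z x = S.oplus z y) : x = y :=
  S.C3 x y z (by rwa [S.C2 x, S.C2 y])

theorem oplus_oplus_left_distrib (x y z : A) :
    S.oplus x (S.oplus y z) = S.oplus (S.oplus x y) (S.oplus x z) := by
  rw [S.C4, S.C1]

theorem half_mul (x : A) :
    S.mul (S.oplus (S.inv S.one) S.one) x = S.oplus (S.inv S.one) x := by
  rw [S.C7', S.C8', S.C6']

theorem inv_one_oplus_eq_inv_mul_oplus_mul (a b : A) :
    S.oplus (S.inv S.one) a = S.oplus (S.mul (S.inv b) a) (S.mul b a) := by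
  rw [← S.C7', S.C9, S.half_mul]

theorem inv_one_oplus_eq_iff (a b c z : A) :
    S.oplus (S.inv S.one) z = S.oplus (S.mul (S.inv b) a) (S.mul b c) ↔
      S.oplus z (S.mul b a) = S.oplus a (S.mul b c) := by
  have hz := S.oplus_oplus_left_distrib (S.inv S.one) z (S.mul b a)
  have ha : S.oplus (S.inv S.one) (S.oplus a (S.mul b c)) =
      S.oplus (S.oplus (S.mul (S.inv b) a) (S.mul b c)) (S.oplus (S.inv S.one) (S.mul b a)) := by
    rw [S.oplus_oplus_left_distrib, S.inv_one_oplus_eq_inv_mul_oplus_mul a b,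
      S.C2 (S.inv S.one) (S.mul b c), S.C4, S.C2 (S.mul b a)]
  constructor
  · intro h
    exact S.oplus_left_cancel (by rw [hz, ha, h])
  · intro h
    exact S.C3 _ _ _ (by rw [← hz, ← ha, h])

namespace IsMobiOp

variable {S} {p : A → A → A → A} (hp : S.IsMobiOp p)
include hp

theorem oplus_mul_eq (a b c : A) : S.oplus (p a b c) (S.mul b a) = S.oplus a (S.mul b c) :=
  (S.inv_one_oplus_eq_iff a b c _).1 (hp a b c)

theorem eq_of_oplus_mul_eq {a b c z : A} (h : S.oplus z (S.mul b a) = S.oplus a (S.mul b c)) :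
    z = p a b c :=
  S.C3 _ _ _ (h.trans (hp.oplus_mul_eq a b c).symm)

theorem unique {q : A → A → A → A} (hq : S.IsMobiOp q) : p = q := by
  funext a b c
  exact S.oplus_left_cancel ((hp a b c).trans (hq a b c).symm)

theorem one_half_inv_one :
    p S.one (S.oplus (S.inv S.one) S.one) (S.inv S.one) = S.oplus (S.inv S.one) S.one := by
  refine (hp.eq_of_oplus_mul_eq ?_).symm
  rw [S.C6, S.C8, S.C1, S.C2]

theorem inv_one_one (a : A) : p (S.inv S.one) a S.one = a := by
  refine (hp.eq_of_oplus_mul_eq ?_).symm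
  rw [S.C8, S.C6, S.C2]

theorem same (a b : A) : p a b a = a :=
  (hp.eq_of_oplus_mul_eq rfl).symm

theorem inv_one_mid (a b : A) : p a (S.inv S.one) b = a := by
  refine (hp.eq_of_oplus_mul_eq ?_).symm
  rw [S.C8', S.C8']

theorem one_mid (a b : A) : p a S.one b = b := by
  refine (hp.eq_of_oplus_mul_eq ?_).symm
  rw [S.C6', S.C6', S.C2]

theorem half_mid (a b : A) : p a (S.oplus (S.inv S.one) S.one) b = S.oplus a b := by
  refine (hp.eq_of_oplus_mul_eq ?_).symm
  rw [S.half_mul, S.half_mul, S.C4, S.C2 b, ← S.C4, S.C1]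

theorem half_mid_injective (a a' b : A)
    (h : p a (S.oplus (S.inv S.one) S.one) b = p a' (S.oplus (S.inv S.one) S.one) b) :
    a = a' :=
  S.C3 a a' b (by rwa [hp.half_mid, hp.half_mid] at h)

theorem mid_mid (a b c₁ c₂ c₃ : A) :
    p a (p c₁ c₂ c₃) b = p (p a c₁ b) c₂ (p a c₃ b) := by
  set q := p c₁ c₂ c₃
  set u := p a c₁ b
  set v := p a c₃ b
  have hw := hp.oplus_mul_eq a q b
  have hq := hp.oplus_mul_eq c₁ c₂ c₃
  have hqa : S.oplus (S.mul q a) (S.mul (S.mul c₂ c₁) a) =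
      S.oplus (S.mul c₁ a) (S.mul (S.mul c₂ c₃) a) := by
    rw [← S.C7', ← S.C7', hq]
  have hqb : S.oplus (S.mul q b) (S.mul (S.mul c₂ c₁) b) =
      S.oplus (S.mul c₁ b) (S.mul (S.mul c₂ c₃) b) := by
    rw [← S.C7', ← S.C7', hq]
  have hu : S.oplus (S.mul c₂ u) (S.mul (S.mul c₂ c₁) a) =
      S.oplus (S.mul c₂ a) (S.mul (S.mul c₂ c₁) b) := by
    rw [← S.C5, ← S.C5, ← S.C7, ← S.C7, hp.oplus_mul_eq]
  have hv : S.oplus (S.mul c₂ v) (S.mul (S.mul c₂ c₃) a) =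
      S.oplus (S.mul c₂ a) (S.mul (S.mul c₂ c₃) b) := by
    rw [← S.C5, ← S.C5, ← S.C7, ← S.C7, hp.oplus_mul_eq]
  -- Both sides of the target identity `p a q b ⊕ c₂·u = u ⊕ c₂·v` become equal after adding
  -- `q·a ⊕ (c₂·c₁)·a`.
  refine hp.eq_of_oplus_mul_eq (S.C3 _ _ (S.oplus (S.mul q a) (S.mul (S.mul c₂ c₁) a)) ?_)
  calc S.oplus (S.oplus (p a q b) (S.mul c₂ u)) (S.oplus (S.mul q a) (S.mul (S.mul c₂ c₁) a))
      = S.oplus (S.oplus a (S.mul q b)) (S.oplus (S.mul c₂ a) (S.mul (S.mul c₂ c₁) b)) := by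
        rw [S.C4, hw, hu]
    _ = S.oplus (S.oplus a (S.mul c₂ a)) (S.oplus (S.mul c₁ b) (S.mul (S.mul c₂ c₃) b)) := by
        rw [S.C4, hqb]
    _ = S.oplus (S.oplus u (S.mul c₁ a)) (S.oplus (S.mul c₂ v) (S.mul (S.mul c₂ c₃) a)) := by
        rw [hp.oplus_mul_eq, hv, S.C4]
    _ = S.oplus (S.oplus u (S.mul c₂ v)) (S.oplus (S.mul q a) (S.mul (S.mul c₂ c₁) a)) := by
        rw [S.C4, hqa]

theorem half_mid_comm (a₁ a₂ b₁ b₂ c : A) :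
    p (p a₁ c b₁) (S.oplus (S.inv S.one) S.one) (p a₂ c b₂) =
      p (p a₁ (S.oplus (S.inv S.one) S.one) a₂) c (p b₁ (S.oplus (S.inv S.one) S.one) b₂) := by
  rw [hp.half_mid, hp.half_mid, hp.half_mid]
  refine hp.eq_of_oplus_mul_eq ?_
  rw [S.C7, S.C4, hp.oplus_mul_eq, hp.oplus_mul_eq, S.C4, ← S.C7]

def toMobiAlgebra : MobiAlgebra A where
  p := p
  e0 := S.inv S.one
  half := S.oplus (S.inv S.one) S.one
  e1 := S.one
  A1 := hp.one_half_inv_one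
  A2 := hp.inv_one_one
  A3 := hp.same
  A4 := hp.inv_one_mid
  A5 := hp.one_mid
  A6 := hp.half_mid_injective
  A7 := hp.mid_mid
  A8 := hp.half_mid_comm

end IsMobiOp

end IMMStar

/-- Theorem 6.3: for an IMM* algebra, the following are equivalent:
(i) for all a,b,c the equation 1̄⊕x = (b̄·a)⊕(b·c) has a solution;
(ii) there is a unique mobi algebra (A,p,1̄,1̄⊕1,1) such that
     1̄ ⊕ p(a,b,c) = (b̄·a)⊕(b·c). -/
theorem IMMStar_mobi_equiv {A : Type*} (S : IMMStar A) :
    (∀ a b c : A, ∃ x : A,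
        S.oplus (S.inv S.one) x =
          S.oplus (S.mul (S.inv b) a) (S.mul b c)) ↔
    (∃! M : MobiAlgebra A,
      M.e0 = S.inv S.one ∧
      M.half = S.oplus (S.inv S.one) S.one ∧
      M.e1 = S.one ∧
      ∀ a b c, S.oplus (S.inv S.one) (M.p a b c) =
        S.oplus (S.mul (S.inv b) a) (S.mul b c)) := by
  constructor
  · intro H
    choose p hp using H
    change S.IsMobiOp p at hp
    refine ⟨hp.toMobiAlgebra, ⟨rfl, rfl, rfl, hp⟩, ?_⟩
    rintro M ⟨h0, hh, h1, hM⟩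
    exact MobiAlgebra.ext (hp.unique hM).symm h0 hh h1
  · rintro ⟨M, ⟨-, -, -, hM⟩, -⟩ a b c
    exact ⟨M.p a b c, hM a b c⟩
end

section
/- Let (A, ¯(), ⊕, ·, 1) be an IMM algebra and suppose the element 1̄⊕1 has a two-sided multiplicative inverse h (i.e., (1̄⊕1)·h = 1 = h·(1̄⊕1)). Define p(a,b,c) = h·((b̄·a)⊕(b·c)). Then (A, p, 1̄, 1̄⊕1, 1) is a mobi algebra, and it is the unique mobi algebra structure on A with constants 1̄, 1̄⊕1, 1 satisfying 1̄ ⊕ p(a,b,c) = (b̄·a)⊕(b·c) for all a, b, c ∈ A. -/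
/-!
Write `½ = 1̄ ⊕ 1` and `W(a, b, c) = b̄·a ⊕ b·c`, so that `p = h·W`. Since `½·x = 1̄ ⊕ x = x·½`,
the element `½` is central; hence its right inverse `h` is a two-sided inverse and central, and
`x ↦ 1̄ ⊕ x` is a bijection with inverse `x ↦ h·x`. Every mobi axiom for `p` can therefore be
checked after applying `1̄ ⊕ ·` to both sides, where it becomes an identity for `W` that follows
from the medial, distributive and involution laws. Two further facts are needed:
`p(a, b, c)‾ = p(ā, b, c̄)`, and cancellation `a ⊕ b = a' ⊕ b → a = a'`, which gives (A6).
Uniqueness is the injectivity of `1̄ ⊕ ·`.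
-/

namespace IMM

variable {A : Type*} (I : IMM A)

def half : A := I.oplus (I.inv I.one) I.one

def weightedSum (a b c : A) : A := I.oplus (I.mul (I.inv b) a) (I.mul b c)

def mobiOp (h a b c : A) : A := I.mul h (I.weightedSum a b c)

theorem half_mul (x : A) : I.mul I.half x = I.oplus (I.inv I.one) x := by
  rw [half, I.B6', I.B9', I.B5']

theorem mul_half (x : A) : I.mul x I.half = I.oplus (I.inv I.one) x := by
  rw [half, I.B6, I.B9, I.B5]

theorem inv_half : I.inv I.half = I.half := by
  rw [half, I.B8, I.B7, I.B2]

theorem weightedSum_self (a b : A) : I.weightedSum a b a = I.oplus (I.inv I.one) a := by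
  rw [weightedSum, ← I.B6', I.B10, ← half, half_mul]

theorem weightedSum_half (a b : A) :
    I.weightedSum a I.half b = I.oplus (I.inv I.one) (I.oplus a b) := by
  rw [weightedSum, inv_half, half_mul, half_mul, I.B3, I.B1]

theorem weightedSum_oplus (a₁ a₂ b₁ b₂ c : A) :
    I.oplus (I.weightedSum a₁ c b₁) (I.weightedSum a₂ c b₂)
      = I.weightedSum (I.oplus a₁ a₂) c (I.oplus b₁ b₂) := by
  rw [weightedSum, weightedSum, weightedSum, I.B3, ← I.B6, ← I.B6]

theorem weightedSum_inv_oplus (a b c : A) :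
    I.oplus (I.weightedSum (I.inv a) b (I.inv c)) (I.weightedSum a b c)
      = I.oplus (I.inv I.one) I.half := by
  rw [weightedSum_oplus, I.B10 a, I.B10 c, ← half, weightedSum_self]

theorem weightedSum_weightedSum (a b c₁ c₂ c₃ : A) :
    I.oplus (I.mul (I.weightedSum (I.inv c₁) c₂ (I.inv c₃)) a)
        (I.mul (I.weightedSum c₁ c₂ c₃) b)
      = I.weightedSum (I.weightedSum a c₁ b) c₂ (I.weightedSum a c₃ b) := by
  simp only [weightedSum]
  rw [I.B6', I.B6', I.B3, I.B6, I.B6, I.B4, I.B4, I.B4, I.B4]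

section Inverse

variable {I} {h : A} (hinv : I.mul h I.half = I.one)
include hinv

theorem half_mul_eq_one : I.mul I.half h = I.one := by
  rwa [half_mul, ← mul_half]

theorem mul_inv_one_oplus (x : A) : I.mul h (I.oplus (I.inv I.one) x) = x := by
  rw [← half_mul, I.B4, hinv, I.B5']

theorem inv_one_oplus_mul (x : A) : I.oplus (I.inv I.one) (I.mul h x) = x := by
  rw [← half_mul, I.B4, half_mul_eq_one hinv, I.B5']

theorem oplus_inv_one_injective : Function.Injective (I.oplus (I.inv I.one)) :=
  Function.LeftInverse.injective (mul_inv_one_oplus hinv)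

theorem mul_comm_of_mul_half_eq_one (x : A) : I.mul h x = I.mul x h := by
  apply oplus_inv_one_injective hinv
  rw [inv_one_oplus_mul hinv, ← mul_half, ← I.B4, hinv, I.B5]

theorem oplus_right_cancel {a a' b : A} (e : I.oplus a b = I.oplus a' b) : a = a' := by
  -- adding `1̄ ⊕ b̄` to `u ⊕ b` trades `b` for `1`, since `b ⊕ b̄ = 1̄ ⊕ 1`
  have trade (u : A) : I.oplus (I.oplus u b) (I.oplus (I.inv I.one) (I.inv b))
      = I.oplus (I.inv I.one) (I.oplus u I.one) := by
    rw [I.B3, I.B2 b, I.B10, I.B2 u, I.B3, I.B1]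
  have e_one : I.oplus a I.one = I.oplus a' I.one :=
    oplus_inv_one_injective hinv (by rw [← trade, ← trade, e])
  have e_inv : I.inv a = I.inv a' := by
    apply oplus_inv_one_injective hinv
    simpa only [I.B8, I.B2 (I.inv a), I.B2 (I.inv a')] using congrArg I.inv e_one
  simpa only [I.B7] using congrArg I.inv e_inv

theorem inv_one_oplus_mobiOp (a b c : A) :
    I.oplus (I.inv I.one) (I.mobiOp h a b c) = I.weightedSum a b c :=
  inv_one_oplus_mul hinv _

theorem mobiOp_half (a b : A) : I.mobiOp h a I.half b = I.oplus a b := by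
  rw [mobiOp, weightedSum_half, mul_inv_one_oplus hinv]

theorem inv_mobiOp (a b c : A) :
    I.inv (I.mobiOp h a b c) = I.mobiOp h (I.inv a) b (I.inv c) := by
  symm
  apply oplus_right_cancel hinv (b := I.mobiOp h a b c)
  rw [I.B10, mobiOp, mobiOp, ← I.B6, weightedSum_inv_oplus, mul_inv_one_oplus hinv, half]

theorem mobiOp_mobiOp (a b c₁ c₂ c₃ : A) :
    I.mobiOp h a (I.mobiOp h c₁ c₂ c₃) b
      = I.mobiOp h (I.mobiOp h a c₁ b) c₂ (I.mobiOp h a c₃ b) := by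
  have pull (x y : A) : I.mul x (I.mul h y) = I.mul h (I.mul x y) := by
    rw [I.B4, ← mul_comm_of_mul_half_eq_one hinv, ← I.B4]
  apply oplus_inv_one_injective hinv
  rw [inv_one_oplus_mobiOp hinv, inv_one_oplus_mobiOp hinv, weightedSum, inv_mobiOp hinv,
    weightedSum]
  simp only [mobiOp]
  rw [← I.B4, ← I.B4, ← I.B6, pull, pull, ← I.B6, weightedSum_weightedSum, weightedSum]

theorem mobiOp_mobiOp_half (a₁ a₂ b₁ b₂ c : A) :
    I.mobiOp h (I.mobiOp h a₁ c b₁) I.half (I.mobiOp h a₂ c b₂)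
      = I.mobiOp h (I.mobiOp h a₁ I.half a₂) c (I.mobiOp h b₁ I.half b₂) := by
  rw [mobiOp_half hinv, mobiOp_half hinv, mobiOp_half hinv, mobiOp, mobiOp, mobiOp, ← I.B6,
    weightedSum_oplus]

end Inverse

def toMobi {h : A} (hinv : I.mul h I.half = I.one) : MobiAlgebra A where
  p := I.mobiOp h
  e0 := I.inv I.one
  half := I.half
  e1 := I.one
  A1 := by rw [mobiOp_half hinv, I.B2, half]
  A2 a := by rw [mobiOp, weightedSum, I.B9, I.B5, mul_inv_one_oplus hinv]
  A3 a b := by rw [mobiOp, weightedSum_self, mul_inv_one_oplus hinv]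
  A4 a b := by rw [mobiOp, weightedSum, I.B7, I.B5', I.B9', I.B2, mul_inv_one_oplus hinv]
  A5 a b := by rw [mobiOp, weightedSum, I.B9', I.B5', mul_inv_one_oplus hinv]
  A6 a a' b e := by
    rw [mobiOp_half hinv, mobiOp_half hinv] at e
    exact oplus_right_cancel hinv e
  A7 := mobiOp_mobiOp hinv
  A8 := mobiOp_mobiOp_half hinv

end IMM

theorem IMM_to_mobi_general {A : Type*} (I : IMM A) (h : A)
    (h2 : I.mul h (I.oplus (I.inv I.one) I.one) = I.one) :
    (∃ M : MobiAlgebra A,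
      M.p = (fun a b c =>
        I.mul h (I.oplus (I.mul (I.inv b) a) (I.mul b c))) ∧
      M.e0 = I.inv I.one ∧
      M.half = I.oplus (I.inv I.one) I.one ∧
      M.e1 = I.one ∧
      (∀ a b c, I.oplus (I.inv I.one) (M.p a b c) =
        I.oplus (I.mul (I.inv b) a) (I.mul b c))) ∧
    (∀ M : MobiAlgebra A,
      M.e0 = I.inv I.one →
      M.half = I.oplus (I.inv I.one) I.one →
      M.e1 = I.one →
      (∀ a b c, I.oplus (I.inv I.one) (M.p a b c) =
        I.oplus (I.mul (I.inv b) a) (I.mul b c)) →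
      M.p = (fun a b c =>
        I.mul h (I.oplus (I.mul (I.inv b) a) (I.mul b c)))) := by
  refine ⟨⟨I.toMobi h2, rfl, rfl, rfl, rfl, IMM.inv_one_oplus_mobiOp h2⟩, ?_⟩
  intro M _ _ _ hM
  funext a b c
  apply IMM.oplus_inv_one_injective h2
  exact (hM a b c).trans (IMM.inv_one_oplus_mobiOp h2 a b c).symm

/-- Corollary 6.4: if in an IMM algebra 1̄⊕1 has a two-sided inverse h, then
p(a,b,c) = h·((b̄·a)⊕(b·c)) makes (A,p,1̄,1̄⊕1,1) a mobi algebra, and it is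
the unique mobi algebra with these constants satisfying
1̄ ⊕ p(a,b,c) = (b̄·a)⊕(b·c). -/
theorem IMM_to_mobi {A : Type*} (I : IMM A) (h : A)
    (h1 : I.mul (I.oplus (I.inv I.one) I.one) h = I.one)
    (h2 : I.mul h (I.oplus (I.inv I.one) I.one) = I.one) :
    (∃ M : MobiAlgebra A,
      M.p = (fun a b c =>
        I.mul h (I.oplus (I.mul (I.inv b) a) (I.mul b c))) ∧
      M.e0 = I.inv I.one ∧
      M.half = I.oplus (I.inv I.one) I.one ∧
      M.e1 = I.one ∧
      (∀ a b c, I.oplus (I.inv I.one) (M.p a b c) =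
        I.oplus (I.mul (I.inv b) a) (I.mul b c))) ∧
    (∀ M : MobiAlgebra A,
      M.e0 = I.inv I.one →
      M.half = I.oplus (I.inv I.one) I.one →
      M.e1 = I.one →
      (∀ a b c, I.oplus (I.inv I.one) (M.p a b c) =
        I.oplus (I.mul (I.inv b) a) (I.mul b c)) →
      M.p = (fun a b c =>
        I.mul h (I.oplus (I.mul (I.inv b) a) (I.mul b c)))) :=
  IMM_to_mobi_general I h h2
end

section
/- Let (A, p, 0, ½, 1) be a mobi algebra and let 2 ∈ A be a distinguished element. Define a·b = p(0,a,b) and a+b = 2·p(a,½,b). Then there exists a unitary ring structure on A with addition +, multiplication ·, zero 0 and unit 1 if and only if 2 is the (two-sided) multiplicative inverse of ½, i.e., 2·½ = 1 = ½·2. -/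
/-- A unitary (possibly noncommutative) ring structure, given by its data
and the usual axioms (R1)-(R7). -/
structure UnitaryRing (R : Type*) where
  add : R → R → R
  mul : R → R → R
  zero : R
  one : R
  add_assoc : ∀ a b c, add (add a b) c = add a (add b c)
  add_comm : ∀ a b, add a b = add b a
  add_zero : ∀ a, add a zero = a
  exists_neg : ∀ a, ∃ b, add b a = zero
  mul_assoc : ∀ a b c, mul a (mul b c) = mul (mul a b) c
  mul_one : ∀ a, mul a one = a
  one_mul : ∀ a, mul one a = a
  left_distrib : ∀ a b c, mul a (add b c) = add (mul a b) (mul a c)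
  right_distrib : ∀ a b c, mul (add a b) c = add (mul a c) (mul b c)

section Aux
variable {A : Type*} (M : MobiAlgebra A)

lemma mobi_comm (a b : A) : M.p a M.half b = M.p b M.half a := by
  have h := M.A7 b a M.e1 M.half M.e0
  rw [M.A1, M.A5, M.A4] at h
  exact h.symm

lemma mobi_mul_assoc (a b c : A) :
    M.p M.e0 (M.p M.e0 a b) c = M.p M.e0 a (M.p M.e0 b c) := by
  have h := M.A7 M.e0 c M.e0 a b
  rw [M.A4] at h
  exact h

lemma mobi_half_central (x : A) : M.p M.e0 x M.half = M.p M.e0 M.half x := by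
  have h := M.A8 M.e0 M.e0 M.e1 M.e0 x
  rw [M.A2, M.A3 M.e0 x, M.A3 M.e0 M.half, M.A1] at h
  rw [← h, mobi_comm]

lemma mobi_leftmuldist (m x y : A) :
    M.p M.e0 m (M.p x M.half y)
      = M.p (M.p M.e0 m x) M.half (M.p M.e0 m y) := by
  have h := M.A8 M.e0 M.e0 x y m
  rw [M.A3] at h
  exact h.symm

lemma mobi_medial (a b c d : A) :
    M.p (M.p a M.half b) M.half (M.p c M.half d)
      = M.p (M.p a M.half c) M.half (M.p b M.half d) :=
  M.A8 a c b d M.half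

lemma mobi_doub (two : A) (h1 : M.p M.e0 two M.half = M.e1) (x : A) :
    M.p M.e0 two (M.p M.e0 M.half x) = x := by
  have h := M.A7 M.e0 x M.e0 two M.half
  rw [h1, M.A5, M.A4] at h
  exact h.symm

lemma mobi_halfmul (two : A) (h2 : M.p M.e0 M.half two = M.e1) (x : A) :
    M.p M.e0 M.half (M.p M.e0 two x) = x := by
  have h := M.A7 M.e0 x M.e0 M.half two
  rw [h2, M.A5, M.A4] at h
  exact h.symm

lemma mobi_negK (two : A) (h2 : M.p M.e0 M.half two = M.e1) (u w : A) :
    M.p u M.half (M.p u two w) = w := by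
  have h := M.A7 u w M.e0 M.half two
  rw [h2, M.A5, M.A4] at h
  exact h.symm

end Aux

/-- Theorem 7.1: given a mobi algebra (A,p,0,½,1) and an element 2 ∈ A,
with a·b = p(0,a,b) and a+b = 2·p(a,½,b), the structure (A,+,·,0,1) is a
unitary ring iff 2 is the two-sided inverse of ½. -/
theorem mobi_two_ring_iff {A : Type*} (M : MobiAlgebra A) (two : A) :
    (∃ R : UnitaryRing A,
      (∀ a b, R.add a b = M.p M.e0 two (M.p a M.half b)) ∧
      (∀ a b, R.mul a b = M.p M.e0 a b) ∧
      R.zero = M.e0 ∧ R.one = M.e1) ↔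
    (M.p M.e0 two M.half = M.e1 ∧ M.p M.e0 M.half two = M.e1) := by
  constructor
  · rintro ⟨R, hadd, hmul, hzero, hone⟩
    have hz : R.add M.e1 M.e0 = M.e1 := by rw [← hone, ← hzero]; exact R.add_zero R.one
    rw [hadd, M.A1] at hz
    refine ⟨hz, ?_⟩
    have h11 : R.add M.e1 M.e1 = two := by rw [hadd, M.A3, M.A2]
    have hhalf1 : R.mul M.half M.e1 = M.half := by rw [hmul, M.A2]
    have hld := R.left_distrib M.half M.e1 M.e1
    rw [h11, hhalf1, hadd, M.A3, hz, hmul] at hld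
    exact hld
  · rintro ⟨h1, h2⟩
    refine ⟨⟨fun a b => M.p M.e0 two (M.p a M.half b),
        fun a b => M.p M.e0 a b, M.e0, M.e1,
        ?_, ?_, ?_, ?_, ?_, ?_, ?_, ?_, ?_⟩,
      fun _ _ => rfl, fun _ _ => rfl, rfl, rfl⟩
    · -- add_assoc
      intro a b c
      have ha : M.p M.e0 two (M.p a M.half M.e0) = a := by
        rw [mobi_comm M a M.e0]; exact mobi_doub M two h1 a
      have hc : M.p M.e0 two (M.p c M.half M.e0) = c := by
        rw [mobi_comm M c M.e0]; exact mobi_doub M two h1 c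
      congr 1
      calc M.p (M.p M.e0 two (M.p a M.half b)) M.half c
          = M.p (M.p M.e0 two (M.p a M.half b)) M.half
              (M.p M.e0 two (M.p c M.half M.e0)) := by rw [hc]
        _ = M.p M.e0 two (M.p (M.p a M.half b) M.half (M.p c M.half M.e0)) :=
            (mobi_leftmuldist M two _ _).symm
        _ = M.p M.e0 two (M.p (M.p a M.half M.e0) M.half (M.p b M.half c)) := by
            rw [mobi_comm M c M.e0, ← mobi_medial M a M.e0 b c]
        _ = M.p (M.p M.e0 two (M.p a M.half M.e0)) M.half
              (M.p M.e0 two (M.p b M.half c)) := mobi_leftmuldist M two _ _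
        _ = M.p a M.half (M.p M.e0 two (M.p b M.half c)) := by rw [ha]
    · -- add_comm
      intro a b
      rw [mobi_comm M a b]
    · -- add_zero
      intro a
      rw [mobi_comm M a M.e0]
      exact mobi_doub M two h1 a
    · -- exists_neg
      intro a
      refine ⟨M.p a two M.e0, ?_⟩
      rw [mobi_comm M _ a, mobi_negK M two h2]
      exact M.A3 M.e0 two
    · -- mul_assoc
      intro a b c
      exact (mobi_mul_assoc M a b c).symm
    · -- mul_one
      intro a; exact M.A2 a
    · -- one_mul
      intro a; exact M.A5 M.e0 a
    · -- left_distrib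
      intro a b c
      have key : M.p M.e0 M.half (M.p M.e0 a (M.p M.e0 two (M.p b M.half c)))
          = M.p (M.p M.e0 a b) M.half (M.p M.e0 a c) := by
        rw [← mobi_mul_assoc, ← mobi_half_central, mobi_mul_assoc,
          mobi_halfmul M two h2, mobi_leftmuldist]
      rw [← key, mobi_doub M two h1]
    · -- right_distrib
      intro a b c
      rw [mobi_mul_assoc, M.A7]
end

section
/- Let (A, +, ·, 0, 1) be a unitary ring with a distinguished element ½ ∈ A, and define the ternary operation p(a,b,c) = a + b·c − b·a. Then (A, p, 0, ½, 1) is a mobi algebra if and only if ½ is the (two-sided) multiplicative inverse of 1+1, i.e., (1+1)·½ = 1 = ½·(1+1). -/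
section RingMobi

variable {A : Type*} [Ring A]

theorem add_self_eq_one_iff {h : A} : h + h = 1 ↔ (1 + 1) * h = 1 ∧ h * (1 + 1) = 1 := by
  simp only [add_mul, mul_add, one_mul, mul_one, and_self]

theorem commute_of_add_self_eq_one {h : A} (hh : h + h = 1) (x : A) : Commute h x :=
  let two : Aˣ := ⟨2, h, by rw [two_mul, hh], by rw [mul_two, hh]⟩
  (Commute.ofNat_left 2 x).units_inv_left (u := two)

def ringMobiOp (a b c : A) : A := a + b * c - b * a

theorem ringMobiOp_eq (a b c : A) : ringMobiOp a b c = (1 - b) * a + b * c := by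
  unfold ringMobiOp; noncomm_ring

theorem ringMobiOp_one_zero (b : A) : ringMobiOp 1 b 0 = 1 - b := by
  simp [ringMobiOp]

theorem ringMobiOp_zero_one (a : A) : ringMobiOp 0 a 1 = a := by
  simp [ringMobiOp]

theorem ringMobiOp_self (a b : A) : ringMobiOp a b a = a := by
  simp [ringMobiOp]

theorem ringMobiOp_zero (a b : A) : ringMobiOp a 0 b = a := by
  simp [ringMobiOp]

theorem ringMobiOp_one (a b : A) : ringMobiOp a 1 b = b := by
  simp [ringMobiOp]

theorem ringMobiOp_left_injective {b : A} (hb : IsLeftRegular (1 - b)) (c : A) :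
    Function.Injective fun a => ringMobiOp a b c := by
  intro a a' h
  simp only [ringMobiOp_eq] at h
  exact hb (add_right_cancel h)

theorem ringMobiOp_ringMobiOp (a b c₁ c₂ c₃ : A) :
    ringMobiOp a (ringMobiOp c₁ c₂ c₃) b =
      ringMobiOp (ringMobiOp a c₁ b) c₂ (ringMobiOp a c₃ b) := by
  unfold ringMobiOp; noncomm_ring

theorem ringMobiOp_medial {h c : A} (hc : Commute h c) (a₁ a₂ b₁ b₂ : A) :
    ringMobiOp (ringMobiOp a₁ c b₁) h (ringMobiOp a₂ c b₂) =
      ringMobiOp (ringMobiOp a₁ h a₂) c (ringMobiOp b₁ h b₂) := by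
  simp only [ringMobiOp, mul_add, mul_sub, ← mul_assoc, hc.eq]
  abel

def ringMobiAlgebra (half : A) (hh : half + half = 1) : MobiAlgebra A where
  p := ringMobiOp
  e0 := 0
  half := half
  e1 := 1
  A1 := by rw [ringMobiOp_one_zero, sub_eq_iff_eq_add, hh]
  A2 := ringMobiOp_zero_one
  A3 := ringMobiOp_self
  A4 := ringMobiOp_zero
  A5 := ringMobiOp_one
  A6 a a' b := by
    have hreg : IsLeftRegular (1 - half) := by
      rw [← hh, add_sub_cancel_right]
      exact isLeftRegular_of_mul_eq_one (b := 2) (by rw [two_mul, hh])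
    exact fun h => ringMobiOp_left_injective hreg b h
  A7 := ringMobiOp_ringMobiOp
  A8 a₁ a₂ b₁ b₂ c := ringMobiOp_medial (commute_of_add_self_eq_one hh c) a₁ a₂ b₁ b₂

end RingMobi

/-- Theorem 7.2: given a unitary ring (A,+,·,0,1) and an element ½ ∈ A,
the structure (A,p,0,½,1) with p(a,b,c) = a + b·c - b·a is a mobi algebra
iff ½ is the two-sided inverse of 1+1. -/
theorem ring_half_mobi_iff {A : Type*} [Ring A] (half : A) :
    (∃ M : MobiAlgebra A,
      M.p = (fun a b c => a + b * c - b * a) ∧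
      M.e0 = 0 ∧ M.half = half ∧ M.e1 = 1) ↔
    ((1 + 1) * half = 1 ∧ half * (1 + 1) = 1) := by
  rw [← add_self_eq_one_iff]
  constructor
  · rintro ⟨M, hp, h0, hh, h1⟩
    have hA1 : ringMobiOp 1 half 0 = half := by
      have := M.A1
      rw [hp, h0, hh, h1] at this
      exact this
    rw [ringMobiOp_one_zero, sub_eq_iff_eq_add] at hA1
    exact hA1.symm
  · intro hh
    exact ⟨ringMobiAlgebra half hh, rfl, rfl, rfl, rfl⟩
end

section
/- The correspondences of the previous two constructions are mutually inverse. Precisely: (1) if (A, +, ·, 0, 1) is a unitary ring in which 2 = 1+1 has a multiplicative inverse 2⁻¹, and p(a,b,c) = a + b·c − b·a is the associated mobi algebra structure (A, p, 0, 2⁻¹, 1), then the ring recovered from it by a ·' b = p(0,a,b) and a +' b = 2 · p(a, 2⁻¹, b) coincides with the original ring: a·'b = a·b and a+'b = a+b for all a, b ∈ A; (2) if (A, p, 0, ½, 1) is a mobi algebra containing an element 2 with 2·½ = 1 = ½·2 (where a·b = p(0,a,b)), and (A, +, ·, 0, 1) is the associated unitary ring with a+b = 2·p(a,½,b), then the mobi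 algebra recovered from this ring by p'(a,b,c) = a + b·c − b·a coincides with the original: p'(a,b,c) = p(a,b,c) for all a, b, c ∈ A. -/
/-!
The ring half is arithmetic. For the mobi half, `p(x,½,y)` is symmetric (apply (A7) to
`½ = p(1,½,0)`), and with this the instance `p(p(a,b,c), ½, b·a) = p(a, ½, b·c)` of (A8), read
through `x + y = 2·p(x,½,y)`, says `p(a,b,c) + b·a = a + b·c`; adding a negative of `b·a` gives
`a + b·c − b·a = p(a,b,c)`.
-/

theorem two_mul_add_mul_sub_mul {A : Type*} [Ring A] {h : A} (hh : (1 + 1) * h = 1) (a b : A) :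
    (1 + 1) * (a + h * b - h * a) = a + b := by
  rw [mul_sub, mul_add, ← mul_assoc, ← mul_assoc, hh, one_mul, one_mul, add_mul, one_mul]
  abel

namespace MobiAlgebra

variable {B : Type*} (M : MobiAlgebra B)

theorem p_half_comm_s19 (x y : B) : M.p x M.half y = M.p y M.half x := by
  simpa only [M.A1, M.A5, M.A4] using M.A7 x y M.e1 M.half M.e0

theorem p_half_p_e0 (a b c : B) :
    M.p (M.p a b c) M.half (M.p M.e0 b a) = M.p a M.half (M.p M.e0 b c) := by
  have h := M.A8 a M.e0 a c b
  rw [M.A3 a b] at h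
  rw [M.A8, h, M.p_half_comm_s19 c a]

end MobiAlgebra

theorem UnitaryRing.add_add_cancel_of_add_eq_zero {B : Type*} (R : UnitaryRing B) {n y : B}
    (hn : R.add n y = R.zero) (x : B) : R.add (R.add x y) n = x := by
  rw [R.add_assoc, R.add_comm y, hn, R.add_zero]

theorem mobi_ring_mutually_inverse_general
    {A : Type*} [Ring A] (h2 : A)
    (h2l : (1 + 1) * h2 = 1)
    {B : Type*} (M : MobiAlgebra B) (two : B)
    (R : UnitaryRing B)
    (hadd : ∀ a b, R.add a b = M.p M.e0 two (M.p a M.half b))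
    (hmul : ∀ a b, R.mul a b = M.p M.e0 a b) :
    (∀ a b : A,
      ((0:A) + a * b - a * 0 = a * b) ∧
      ((0:A) + (1 + 1) * (a + h2 * b - h2 * a) - (1 + 1) * 0 = a + b)) ∧
    (∀ a b c n : B, R.add n (R.mul b a) = R.zero →
      R.add (R.add a (R.mul b c)) n = M.p a b c) := by
  refine ⟨fun a b => ⟨by simp, by simpa using two_mul_add_mul_sub_mul h2l a b⟩, ?_⟩
  intro a b c n hn
  have key : R.add (M.p a b c) (R.mul b a) = R.add a (R.mul b c) := by
    simp only [hadd, hmul, M.p_half_p_e0]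
  rw [← key, R.add_add_cancel_of_add_eq_zero hn]

/-- Theorem 7.3 (the two constructions are mutually inverse):
(1) starting from a unitary ring A in which 2 = 1+1 has a two-sided inverse
h2, forming the mobi operation p(a,b,c) = a + b·c - b·a and recovering a
ring by a·'b = p(0,a,b) and a+'b = p(0, 1+1, p(a,h2,b)) gives back the
original ring operations;
(2) starting from a mobi algebra B with an element 2 that is a two-sided
inverse of ½ (for a·b = p(0,a,b)), and a unitary ring structure R on B with
a+b = 2·p(a,½,b), a·b = p(0,a,b), zero = 0, one = 1, the mobi operation
recovered from R by p'(a,b,c) = a + b·c - b·a coincides with p. -/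
theorem mobi_ring_mutually_inverse
    {A : Type*} [Ring A] (h2 : A)
    (h2l : (1 + 1) * h2 = 1) (h2r : h2 * (1 + 1) = 1)
    {B : Type*} (M : MobiAlgebra B) (two : B)
    (htl : M.p M.e0 two M.half = M.e1) (htr : M.p M.e0 M.half two = M.e1)
    (R : UnitaryRing B)
    (hadd : ∀ a b, R.add a b = M.p M.e0 two (M.p a M.half b))
    (hmul : ∀ a b, R.mul a b = M.p M.e0 a b)
    (hzero : R.zero = M.e0) (hone : R.one = M.e1) :
    (∀ a b : A,
      ((0:A) + a * b - a * 0 = a * b) ∧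
      ((0:A) + (1 + 1) * (a + h2 * b - h2 * a) - (1 + 1) * 0 = a + b)) ∧
    (∀ a b c n : B, R.add n (R.mul b a) = R.zero →
      R.add (R.add a (R.mul b c)) n = M.p a b c) :=
  mobi_ring_mutually_inverse_general h2 h2l M two R hadd hmul
end
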